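/- (Residue inequality for projected inexact dual ascent.) If 2γ‖A‖² ≤ α, then for every τ ∈ EuclideanSpace ℝ κ with τ ≥ 0 componentwise and every s ∈ ℕ, ‖τ^{s+1} − τ‖² ≤ ‖τ^s − τ‖² + 2γ·( d(τ^{s+1}) − L(y^s, τ^s) + 2ε^s + ⟪A y^s − b, τ^s − τ⟫ ). -/

import Mathlib

open scoped RealInnerProductSpace

/-!
Write `δ = τ^{s+1} - τ^s` and `g = A y^s - b`. Since `τ^{s+1}` is the projection of
`τ^s + γ g` onto the nonnegative orthant and `τ ≥ 0`, the usual projected-step estimate gives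
`‖τ^{s+1} - τ‖² ≤ ‖τ^s - τ‖² + 2γ⟪g, τ^s - τ⟫ + (2γ⟪g, δ⟫ - ‖δ‖²)`.
The bracket is controlled by the dual function: `L(·, τ^s)` is `α`-strongly convex and `y^s`
minimizes it up to `ε^s`, so `L(y, τ^s) ≥ L(y^s, τ^s) - 2ε^s + α/4 ‖y - y^s‖²` on `Y`, and the
quadratic term absorbs `⟪δ, A (y - y^s)⟫ ≥ -‖δ‖ ‖A‖ ‖y - y^s‖` up to `‖δ‖² / (2γ)` exactly when
`2γ‖A‖² ≤ α`.
-/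

section StrongConvexity

variable {E : Type*} [NormedAddCommGroup E] [NormedSpace ℝ E] {s : Set E} {m : ℝ} {f g : E → ℝ}

theorem StrongConvexOn.add_convexOn (hf : StrongConvexOn s m f) (hg : ConvexOn ℝ s g) :
    StrongConvexOn s m (f + g) := by
  simpa [StrongConvexOn] using hf.add hg.uniformConvexOn_zero

/-- The factor `2` in front of `ε` comes from comparing with the midpoint of `x` and `y`. -/
theorem StrongConvexOn.quadratic_growth_of_approx_min (hf : StrongConvexOn s m f) {x y : E}
    {ε : ℝ} (hx : x ∈ s) (hmin : ∀ z ∈ s, f x ≤ f z + ε) (hy : y ∈ s) :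
    f x - 2 * ε + m / 4 * ‖y - x‖ ^ 2 ≤ f y := by
  have hhalf : (0 : ℝ) ≤ 1 / 2 := by norm_num
  have hmid := hf.2 hy hx hhalf hhalf (by norm_num)
  have hxmid := hmin _ (hf.1 hy hx hhalf hhalf (by norm_num))
  simp only [smul_eq_mul] at hmid
  linarith

end StrongConvexity

section Orthant

variable {κ : Type*} [Fintype κ]

/-- The variational inequality of the projection onto the nonnegative orthant. -/
theorem inner_sub_sub_nonpos_of_eq_max_zero {v p τ : EuclideanSpace ℝ κ}
    (hp : ∀ i, p i = max (v i) 0) (hτ : ∀ i, 0 ≤ τ i) : ⟪p - v, p - τ⟫ ≤ 0 := by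
  simp only [PiLp.inner_apply, PiLp.sub_apply, RCLike.inner_apply, conj_trivial]
  refine Finset.sum_nonpos fun i _ => ?_
  rw [hp i]
  rcases le_total 0 (v i) with hv | hv
  · simp [max_eq_left hv]
  · rw [max_eq_right hv]
    nlinarith [hτ i]

end Orthant

section ProjectedStep

variable {F : Type*} [NormedAddCommGroup F] [InnerProductSpace ℝ F]

theorem norm_sub_sq_le_of_inner_step_nonpos {p q g τ : F} {γ : ℝ}
    (h : ⟪p - (q + γ • g), p - τ⟫ ≤ 0) :
    ‖p - τ‖ ^ 2 ≤ ‖q - τ‖ ^ 2 + 2 * γ * ⟪g, q - τ⟫ + (2 * γ * ⟪g, p - q⟫ - ‖p - q‖ ^ 2) := by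
  have hexp : ‖q - τ‖ ^ 2 = ‖p - τ‖ ^ 2 - 2 * ⟪p - τ, p - q⟫ + ‖p - q‖ ^ 2 := by
    rw [← norm_sub_sq_real, sub_sub_sub_cancel_left]
  have hsplit : p - τ = (q - τ) + (p - q) := by abel
  have hcross : ⟪p - τ, p - q⟫ = ⟪p - q, q - τ⟫ + ‖p - q‖ ^ 2 := by
    rw [real_inner_comm, hsplit, inner_add_right, real_inner_self_eq_norm_sq]
  rw [show p - (q + γ • g) = (p - q) - γ • g by abel, inner_sub_left, real_inner_smul_left,
    hsplit, inner_add_right, inner_add_right, real_inner_self_eq_norm_sq] at h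
  linarith

end ProjectedStep

section Lagrangian

variable {E F : Type*} [NormedAddCommGroup E] [InnerProductSpace ℝ E]
  [NormedAddCommGroup F] [InnerProductSpace ℝ F]
  (Y : Set E) (F₀ : E → ℝ) (A : E →L[ℝ] F) (b : F)

def lagrangian (y : E) (τ : F) : ℝ := F₀ y + ⟪τ, A y - b⟫

noncomputable def dualFunction (τ : F) : ℝ := sInf ((fun y => lagrangian F₀ A b y τ) '' Y)

variable {Y F₀ A b}

theorem lagrangian_add_right (y : E) (τ δ : F) :
    lagrangian F₀ A b y (τ + δ) = lagrangian F₀ A b y τ + ⟪δ, A y - b⟫ := by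
  simp only [lagrangian, inner_add_left]
  ring

theorem continuous_lagrangian (hF₀ : Continuous F₀) (τ : F) :
    Continuous fun y => lagrangian F₀ A b y τ :=
  hF₀.add (continuous_const.inner (A.continuous.sub continuous_const))

theorem strongConvexOn_lagrangian {α : ℝ} (hF₀ : StrongConvexOn Y α F₀) (τ : F) :
    StrongConvexOn Y α fun y => lagrangian F₀ A b y τ := by
  have haff : ConvexOn ℝ Y fun y => ⟪τ, A y - b⟫ := by
    refine ((((innerSL ℝ τ).comp A).toLinearMap.convexOn hF₀.1).add_const (-⟪τ, b⟫)).congr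
      fun y _ => ?_
    rw [inner_sub_right, sub_eq_add_neg]
    rfl
  exact hF₀.add_convexOn haff

theorem dualFunction_le_lagrangian {τ : F}
    (hbdd : BddBelow ((fun y => lagrangian F₀ A b y τ) '' Y)) {y : E} (hy : y ∈ Y) :
    dualFunction Y F₀ A b τ ≤ lagrangian F₀ A b y τ :=
  csInf_le hbdd ⟨y, hy, rfl⟩

theorem lagrangian_sub_le_dualFunction_add {α γ ε : ℝ} {τ : F} {y : E}
    (hF₀ : StrongConvexOn Y α F₀) (hbdd : BddBelow ((fun y => lagrangian F₀ A b y τ) '' Y))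
    (hγ : 0 < γ) (hstep : 2 * γ * ‖A‖ ^ 2 ≤ α) (hy : y ∈ Y)
    (hyeq : lagrangian F₀ A b y τ ≤ dualFunction Y F₀ A b τ + ε) (δ : F) :
    lagrangian F₀ A b y τ - 2 * ε + ⟪δ, A y - b⟫ - ‖δ‖ ^ 2 / (2 * γ)
      ≤ dualFunction Y F₀ A b (τ + δ) := by
  have hmin : ∀ z ∈ Y, lagrangian F₀ A b y τ ≤ lagrangian F₀ A b z τ + ε := fun z hz =>
    hyeq.trans (by gcongr; exact dualFunction_le_lagrangian hbdd hz)
  refine le_csInf ⟨_, y, hy, rfl⟩ ?_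
  rintro _ ⟨z, hz, rfl⟩
  have hgrowth := (strongConvexOn_lagrangian hF₀ τ).quadratic_growth_of_approx_min hy hmin hz
  have hcross : -(‖δ‖ * (‖A‖ * ‖z - y‖)) ≤ ⟪δ, A z - A y⟫ := by
    refine (neg_le_neg ?_).trans (neg_abs_le _)
    calc |⟪δ, A z - A y⟫| ≤ ‖δ‖ * ‖A (z - y)‖ := by
          rw [map_sub]; exact abs_real_inner_le_norm _ _
      _ ≤ ‖δ‖ * (‖A‖ * ‖z - y‖) := by gcongr; exact A.le_opNorm _
  have hyoung : ‖δ‖ * (‖A‖ * ‖z - y‖) ≤ α / 4 * ‖z - y‖ ^ 2 + ‖δ‖ ^ 2 / (2 * γ) := by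
    have hsq : α / 4 * ‖z - y‖ ^ 2 + ‖δ‖ ^ 2 / (2 * γ) - ‖δ‖ * (‖A‖ * ‖z - y‖)
        = (α - 2 * γ * ‖A‖ ^ 2) / 4 * ‖z - y‖ ^ 2
          + (γ * ‖A‖ * ‖z - y‖ - ‖δ‖) ^ 2 / (2 * γ) := by
      field_simp
      ring
    rw [← sub_nonneg, hsq]
    have := sub_nonneg.2 hstep
    positivity
  have hsplit : ⟪δ, A z - b⟫ = ⟪δ, A y - b⟫ + ⟪δ, A z - A y⟫ := by
    rw [← inner_add_right, sub_add_sub_cancel']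
  simp only [lagrangian_add_right, hsplit]
  linarith

end Lagrangian

theorem stmt_5_general
    {ι κ : Type*} [Fintype ι] [Fintype κ]
    (Y : Set (EuclideanSpace ℝ ι)) (hYcpt : IsCompact Y)
    (α : ℝ)
    (F₀ : EuclideanSpace ℝ ι → ℝ) (hF₀cont : Continuous F₀)
    (hF₀sc : StrongConvexOn Y α F₀)
    (A : EuclideanSpace ℝ ι →L[ℝ] EuclideanSpace ℝ κ) (b : EuclideanSpace ℝ κ)
    (L : EuclideanSpace ℝ ι → EuclideanSpace ℝ κ → ℝ)
    (hL : ∀ y τ, L y τ = F₀ y + ⟪τ, A y - b⟫)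
    (d : EuclideanSpace ℝ κ → ℝ)
    (hd : ∀ τ, d τ = sInf ((fun y => L y τ) '' Y))
    (γ : ℝ) (hγ : 0 < γ)
    (τs : ℕ → EuclideanSpace ℝ κ) (ys : ℕ → EuclideanSpace ℝ ι) (εs : ℕ → ℝ)
    (hysY : ∀ s, ys s ∈ Y)
    (hyseq : ∀ s, L (ys s) (τs s) ≤ d (τs s) + εs s)
    (hupdate : ∀ s i, τs (s + 1) i = max (τs s i + γ * (A (ys s) - b) i) 0)
    (hstep : 2 * γ * ‖A‖ ^ 2 ≤ α)
    :
    ∀ τ : EuclideanSpace ℝ κ, (∀ i, 0 ≤ τ i) → ∀ s : ℕ,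
      ‖τs (s + 1) - τ‖ ^ 2 ≤ ‖τs s - τ‖ ^ 2 +
        2 * γ * (d (τs (s + 1)) - L (ys s) (τs s) + 2 * εs s + ⟪A (ys s) - b, τs s - τ⟫) := by
  obtain rfl : L = lagrangian F₀ A b := funext₂ hL
  obtain rfl : d = dualFunction Y F₀ A b := funext hd
  intro τ hτ s
  have hdual := lagrangian_sub_le_dualFunction_add hF₀sc
    (hYcpt.image (continuous_lagrangian hF₀cont _)).bddBelow hγ hstep (hysY s) (hyseq s)
    (τs (s + 1) - τs s)
  rw [add_sub_cancel] at hdual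
  have hproj := inner_sub_sub_nonpos_of_eq_max_zero (v := τs s + γ • (A (ys s) - b))
    (hupdate s) hτ
  have hpstep := norm_sub_sq_le_of_inner_step_nonpos hproj
  have hcancel : 2 * γ * (‖τs (s + 1) - τs s‖ ^ 2 / (2 * γ)) = ‖τs (s + 1) - τs s‖ ^ 2 := by
    field_simp
  rw [real_inner_comm] at hdual
  linarith [mul_le_mul_of_nonneg_left hdual (by positivity : (0 : ℝ) ≤ 2 * γ)]

theorem stmt_5
    {ι κ : Type*} [Fintype ι] [Fintype κ] [Nonempty ι] [Nonempty κ]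
    (Y : Set (EuclideanSpace ℝ ι)) (hYne : Y.Nonempty) (hYcpt : IsCompact Y)
    (hYconv : Convex ℝ Y)
    (α : ℝ) (hα : 0 < α)
    (F₀ : EuclideanSpace ℝ ι → ℝ) (hF₀cont : Continuous F₀)
    (hF₀sc : StrongConvexOn Y α F₀)
    (A : EuclideanSpace ℝ ι →L[ℝ] EuclideanSpace ℝ κ) (b : EuclideanSpace ℝ κ)
    (L : EuclideanSpace ℝ ι → EuclideanSpace ℝ κ → ℝ)
    (hL : ∀ y τ, L y τ = F₀ y + ⟪τ, A y - b⟫)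
    (d : EuclideanSpace ℝ κ → ℝ)
    (hd : ∀ τ, d τ = sInf ((fun y => L y τ) '' Y))
    (γ : ℝ) (hγ : 0 < γ)
    (τs : ℕ → EuclideanSpace ℝ κ) (ys : ℕ → EuclideanSpace ℝ ι) (εs : ℕ → ℝ)
    (hτ0 : ∀ i, 0 ≤ τs 0 i)
    (hεs : ∀ s, 0 ≤ εs s)
    (hysY : ∀ s, ys s ∈ Y)
    (hyseq : ∀ s, L (ys s) (τs s) ≤ d (τs s) + εs s)
    (hupdate : ∀ s i, τs (s + 1) i = max (τs s i + γ * (A (ys s) - b) i) 0)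
    (hstep : 2 * γ * ‖A‖ ^ 2 ≤ α)
    :
    ∀ τ : EuclideanSpace ℝ κ, (∀ i, 0 ≤ τ i) → ∀ s : ℕ,
      ‖τs (s + 1) - τ‖ ^ 2 ≤ ‖τs s - τ‖ ^ 2 +
        2 * γ * (d (τs (s + 1)) - L (ys s) (τs s) + 2 * εs s + ⟪A (ys s) - b, τs s - τ⟫) :=
  stmt_5_general Y hYcpt α F₀ hF₀cont hF₀sc A b L hL d hd γ hγ τs ys εs hysY hyseq hupdate hstep
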